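/- Every continuous strongly P-equivariant function g : R^n → C factors through the hull: there exists a continuous function g̃ : M_P → C with g̃(P − x) = g(x) for all x ∈ R^n, defined by g̃(ω) = g(P − y) for any y with B_r ∩ (P − y) = B_r ∩ ω (r the equivariance radius of g). -/

import Mathlib

/-!
Strong equivariance makes `g` constant along translations that preserve a large enough patch.
By finite local complexity and relative density every point can be moved by such a translation
into one fixed compact set, so the continuous function `g` is uniformly continuous. If two
translates of `P` are close in the pattern metric, their large patches agree after small shifts;
strong equivariance and uniform continuity then make the values of `g` close. Thus `g` is
uniformly continuous along the dense orbit in the hull and extends continuously to all of it.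

Small patches of a uniformly discrete set at its points are `{0}`, so the infimum defining the
pattern metric is never over the empty set (where `sInf` would return the junk value `0`).
-/

open Metric Set

noncomputable section

/-- Euclidean space ℝ^n. -/
abbrev E (n : ℕ) := EuclideanSpace ℝ (Fin n)

variable {V : Type*} [SeminormedAddCommGroup V]

/-- The setTranslate `S - x` of a point set `S`. -/
def setTranslate (S : Set V) (x : V) : Set V := {v | x + v ∈ S}

/-- The `r`-patch of `P` at `x`: `B_r ∩ (P - x)` where `B_r` is the closed `r`-ball at `0`. -/
def patch (P : Set V) (x : V) (r : ℝ) : Set V := Metric.closedBall (0 : V) r ∩ setTranslate P x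

/-- `f` is strongly `P`-equivariant: for some `r > 0`, equality of the `r`-patches of `P`
at `x` and `y` implies `f x = f y`. -/
def StronglyEquivariant (P : Set V) {X : Type*} (f : V → X) : Prop :=
  ∃ r > 0, ∀ x y : V, patch P x r = patch P y r → f x = f y

/-- `D` is locally derivable from `P`. -/
def LocallyDerivable (P D : Set V) : Prop :=
  ∀ r > 0, ∃ R > 0, ∀ x y : V, patch P x R = patch P y R → patch D x r = patch D y r

/-- `P` has finite local complexity: for each `r > 0` there are only finitely many
translation classes of `r`-patches (anchored at points of `P`). -/
def FiniteLocalComplexity (P : Set V) : Prop :=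
  ∀ r > 0, {s : Set V | ∃ p ∈ P, s = patch P p r}.Finite

/-- `P` is uniformly discrete. -/
def UniformlyDiscrete (P : Set V) : Prop :=
  ∃ r0 > 0, ∀ p ∈ P, ∀ q ∈ P, p ≠ q → r0 ≤ dist p q

/-- `P` is relatively dense. -/
def RelativelyDense (P : Set V) : Prop :=
  ∃ R > 0, ∀ x : V, ∃ p ∈ P, dist x p ≤ R

/-- The pattern (pseudo)metric `D(S,S') = min(1, inf {1/(r+1) | ∃ x x', |x|,|x'| ≤ 1/r,
B_r ∩ (S-x) = B_r ∩ (S'-x')})`. -/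
def patternDist (S S' : Set V) : ℝ :=
  min 1 (sInf {d : ℝ | ∃ r > 0, d = 1 / (r + 1) ∧
    ∃ x x' : V, ‖x‖ ≤ 1 / r ∧ ‖x'‖ ≤ 1 / r ∧ patch S x r = patch S' x' r})

theorem mem_patch {P : Set V} {x w : V} {r : ℝ} :
    w ∈ patch P x r ↔ ‖w‖ ≤ r ∧ x + w ∈ P := by
  simp [patch, setTranslate]

theorem patch_setTranslate (P : Set V) (a t : V) (r : ℝ) :
    patch (setTranslate P a) t r = patch P (a + t) r := by
  ext w
  simp [patch, setTranslate, add_assoc]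

theorem patch_add_eq_of_patch_eq {P : Set V} {a b v : V} {r R : ℝ}
    (h : patch P a R = patch P b R) (hv : ‖v‖ + r ≤ R) :
    patch P (a + v) r = patch P (b + v) r := by
  ext w
  simp only [mem_patch, add_assoc]
  refine and_congr_right fun hw => ?_
  have hvw : ‖v + w‖ ≤ R := (norm_add_le v w).trans (by linarith)
  simpa [mem_patch, hvw] using congrArg (v + w ∈ ·) h

theorem patch_eq_singleton_zero {P : Set V} {r₀ r : ℝ}
    (hP : ∀ p ∈ P, ∀ q ∈ P, p ≠ q → r₀ ≤ dist p q) (hr : 0 ≤ r) (hrr₀ : r < r₀)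
    {p : V} (hp : p ∈ P) : patch P p r = {0} := by
  ext w
  simp only [mem_patch, mem_singleton_iff]
  constructor
  · rintro ⟨hw, hpw⟩
    by_contra hw0
    have hne : p + w ≠ p := by simpa using hw0
    have := hP _ hpw _ hp hne
    rw [dist_eq_norm, add_sub_cancel_left] at this
    linarith
  · rintro rfl
    simpa using ⟨hr, hp⟩

theorem exists_patch_setTranslate_eq {P : Set V} (hud : UniformlyDiscrete P)
    (hrd : RelativelyDense P) (x y : V) :
    ∃ r > 0, ∃ t t' : V, ‖t‖ ≤ 1 / r ∧ ‖t'‖ ≤ 1 / r ∧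
      patch (setTranslate P x) t r = patch (setTranslate P y) t' r := by
  obtain ⟨r₀, hr₀, hdisc⟩ := hud
  obtain ⟨R, hR, hRd⟩ := hrd
  set r := min (r₀ / 2) (1 / R)
  have hr : 0 < r := lt_min (by positivity) (by positivity)
  have hRr : R ≤ 1 / r := by
    rw [le_div_iff₀ hr, mul_comm, ← le_div_iff₀ hR]
    exact min_le_right _ _
  have singleton_near : ∀ z : V, ∃ t : V, ‖t‖ ≤ 1 / r ∧ patch (setTranslate P z) t r = {0} := by
    intro z
    obtain ⟨p, hp, hzp⟩ := hRd z
    refine ⟨p - z, ?_, ?_⟩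
    · rw [← dist_eq_norm, dist_comm]
      exact hzp.trans hRr
    · rw [patch_setTranslate, add_sub_cancel]
      exact patch_eq_singleton_zero hdisc hr.le ((min_le_left _ _).trans_lt (by linarith)) hp
  obtain ⟨t, ht, hxt⟩ := singleton_near x
  obtain ⟨t', ht', hyt'⟩ := singleton_near y
  exact ⟨r, hr, t, t', ht, ht', hxt.trans hyt'.symm⟩

theorem exists_patch_eq_of_patternDist_lt {S S' : Set V}
    (hne : ∃ r > 0, ∃ t t' : V, ‖t‖ ≤ 1 / r ∧ ‖t'‖ ≤ 1 / r ∧ patch S t r = patch S' t' r)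
    {M : ℝ} (hM : 0 ≤ M) (h : patternDist S S' < 1 / (M + 1)) :
    ∃ r > M, ∃ t t' : V, ‖t‖ ≤ 1 / r ∧ ‖t'‖ ≤ 1 / r ∧ patch S t r = patch S' t' r := by
  have hM1 : 1 / (M + 1) ≤ 1 := by rw [div_le_one (by positivity)]; linarith
  have hinf := (min_lt_iff.mp h).resolve_left (by linarith)
  obtain ⟨_, ⟨r, hr, rfl, hpatch⟩, hlt⟩ := exists_lt_of_csInf_lt
    (by obtain ⟨r, hr, hpatch⟩ := hne; exact ⟨_, r, hr, rfl, hpatch⟩) hinf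
  rw [one_div_lt_one_div (by positivity) (by positivity)] at hlt
  exact ⟨r, by linarith, hpatch⟩

theorem FiniteLocalComplexity.exists_finite_patch_representatives {P : Set V}
    (hP : FiniteLocalComplexity P) {ρ : ℝ} (hρ : 0 < ρ) :
    ∃ Q : Set V, Q.Finite ∧ ∀ p ∈ P, ∃ q ∈ Q, patch P p ρ = patch P q ρ := by
  choose! rep _ hrep using fun (s : Set V) (hs : s ∈ {s | ∃ p ∈ P, s = patch P p ρ}) => hs
  refine ⟨rep '' {s | ∃ p ∈ P, s = patch P p ρ}, (hP ρ hρ).image rep, fun p hp => ?_⟩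
  exact ⟨_, mem_image_of_mem rep ⟨p, hp, rfl⟩, hrep _ ⟨p, hp, rfl⟩⟩

section StronglyEquivariant

variable {P : Set V} {X : Type*} {g : V → X}

theorem StronglyEquivariant.exists_isCompact_translate [ProperSpace V]
    (hg : StronglyEquivariant P g) (hrd : RelativelyDense P) (hFLC : FiniteLocalComplexity P) :
    ∃ K : Set V, IsCompact K ∧ ∀ a b : V, dist a b ≤ 1 →
      ∃ c : V, a + c ∈ K ∧ b + c ∈ K ∧ g (a + c) = g a ∧ g (b + c) = g b := by
  obtain ⟨r₀, hr₀, hse⟩ := hg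
  obtain ⟨R, hR, hRd⟩ := hrd
  obtain ⟨Q, hQ, hrep⟩ := hFLC.exists_finite_patch_representatives (ρ := r₀ + (R + 1))
    (by positivity)
  refine ⟨⋃ q ∈ Q, closedBall q (R + 1), hQ.isCompact_biUnion fun q _ => isCompact_closedBall _ _,
    fun a b hab => ?_⟩
  obtain ⟨p, hp, hap⟩ := hRd a
  obtain ⟨q, hq, hpq⟩ := hrep p hp
  have transport : ∀ z : V, dist z p ≤ R + 1 →
      z + (q - p) ∈ ⋃ q ∈ Q, closedBall q (R + 1) ∧ g (z + (q - p)) = g z := by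
    intro z hz
    have hzq : z + (q - p) = q + (z - p) := by abel
    have hzp : z = p + (z - p) := by abel
    rw [dist_eq_norm] at hz
    refine ⟨mem_biUnion hq ?_, ?_⟩
    · rwa [mem_closedBall, hzq, dist_eq_norm, add_sub_cancel_left]
    · rw [hzq, hzp, add_sub_cancel_left]
      exact (hse _ _ (patch_add_eq_of_patch_eq hpq (by linarith))).symm
  obtain ⟨haK, hga⟩ := transport a (by linarith)
  obtain ⟨hbK, hgb⟩ := transport b (by linarith [dist_triangle b a p, dist_comm a b])
  exact ⟨q - p, haK, hbK, hga, hgb⟩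

theorem StronglyEquivariant.uniformContinuous [PseudoMetricSpace X] [ProperSpace V]
    (hg : StronglyEquivariant P g) (hrd : RelativelyDense P) (hFLC : FiniteLocalComplexity P)
    (hc : Continuous g) : UniformContinuous g := by
  obtain ⟨K, hK, htranslate⟩ := hg.exists_isCompact_translate hrd hFLC
  rw [Metric.uniformContinuous_iff]
  intro ε hε
  obtain ⟨δ, hδ, hK⟩ := Metric.uniformContinuousOn_iff.mp
    (hK.uniformContinuousOn_of_continuous hc.continuousOn) ε hε
  refine ⟨min δ 1, by positivity, fun {a b} hab => ?_⟩
  obtain ⟨c, haK, hbK, hga, hgb⟩ := htranslate a b (hab.le.trans (min_le_right _ _))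
  rw [← hga, ← hgb]
  exact hK _ haK _ hbK (by rw [dist_add_right]; exact hab.trans_le (min_le_left _ _))

theorem StronglyEquivariant.dist_lt_of_patternDist_lt [PseudoMetricSpace X]
    (hg : StronglyEquivariant P g) (hud : UniformlyDiscrete P) (hrd : RelativelyDense P)
    (huc : UniformContinuous g) {ε : ℝ} (hε : 0 < ε) : ∃ δ > 0, ∀ x y : V,
      patternDist (setTranslate P x) (setTranslate P y) < δ → dist (g x) (g y) < ε := by
  obtain ⟨r₀, hr₀, hse⟩ := hg
  obtain ⟨η, hη, hclose⟩ := Metric.uniformContinuous_iff.mp huc (ε / 2) (by positivity)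
  set M := max r₀ (1 / η)
  refine ⟨1 / (M + 1), by positivity, fun x y hxy => ?_⟩
  obtain ⟨r, hrM, t, t', ht, ht', hpatch⟩ := exists_patch_eq_of_patternDist_lt
    (exists_patch_setTranslate_eq hud hrd x y) (hr₀.le.trans (le_max_left _ _)) hxy
  have hr : 0 < r := hr₀.trans_le ((le_max_left _ _).trans hrM.le)
  have hsmall : 1 / r < η := by
    rw [div_lt_iff₀ hr, mul_comm, ← div_lt_iff₀ hη]
    exact (le_max_right _ _).trans_lt hrM
  rw [patch_setTranslate, patch_setTranslate] at hpatch
  have hmid : g (x + t) = g (y + t') := hse _ _ <| by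
    simpa using patch_add_eq_of_patch_eq (v := 0) (r := r₀) hpatch
      (by simpa using ((le_max_left _ _).trans hrM.le))
  have hx : dist (g x) (g (x + t)) < ε / 2 :=
    hclose (by rw [dist_comm, dist_eq_norm, add_sub_cancel_left]; exact ht.trans_lt hsmall)
  have hy : dist (g (y + t')) (g y) < ε / 2 :=
    hclose (by rw [dist_eq_norm, add_sub_cancel_left]; exact ht'.trans_lt hsmall)
  calc dist (g x) (g y) ≤ dist (g x) (g (x + t)) + dist (g (y + t')) (g y) := by
        rw [← hmid]; exact dist_triangle _ _ _
    _ < ε / 2 + ε / 2 := add_lt_add hx hy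
    _ = ε := add_halves ε

end StronglyEquivariant

theorem exists_continuous_extend_of_dist_lt {X Y Z : Type*} [PseudoMetricSpace Y]
    [MetricSpace Z] [CompleteSpace Z] {ι : X → Y} (hdense : DenseRange ι) {g : X → Z}
    (hg : ∀ ε > 0, ∃ δ > 0, ∀ x y : X, dist (ι x) (ι y) < δ → dist (g x) (g y) < ε) :
    ∃ G : Y → Z, Continuous G ∧ ∀ x : X, G (ι x) = g x := by
  let _ := PseudoMetricSpace.induced ι ‹_›
  have hui : IsUniformInducing ι := ⟨rfl⟩
  have huc : UniformContinuous g := Metric.uniformContinuous_iff.mpr fun ε hε => by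
    obtain ⟨δ, hδ, h⟩ := hg ε hε
    exact ⟨δ, hδ, fun {x y} => h x y⟩
  exact ⟨(hui.isDenseInducing hdense).extend g,
    (uniformContinuous_uniformly_extend hui hdense huc).continuous,
    uniformly_extend_of_ind hui hdense huc⟩

theorem stronglyEquivariant_factors_through_hull_general {n : ℕ} (P : Set (E n))
    (hud : UniformlyDiscrete P) (hrd : RelativelyDense P)
    (hFLC : FiniteLocalComplexity P)
    (Y : Type) [MetricSpace Y] (ι : E n → Y)
    (hdense : DenseRange ι)
    (hι : ∀ x y : E n, dist (ι x) (ι y) =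
      patternDist (setTranslate P x) (setTranslate P y))
    (g : E n → ℂ) (hg : Continuous g) (hSE : StronglyEquivariant P g) :
    ∃ gt : Y → ℂ, Continuous gt ∧ ∀ x : E n, gt (ι x) = g x := by
  refine exists_continuous_extend_of_dist_lt hdense fun ε hε => ?_
  obtain ⟨δ, hδ, hclose⟩ :=
    hSE.dist_lt_of_patternDist_lt hud hrd (hSE.uniformContinuous hrd hFLC hg) hε
  exact ⟨δ, hδ, fun x y hxy => hclose x y (hι x y ▸ hxy)⟩

/-- every continuous strongly P-equivariant function factors continuously
through the continuous hull M_P (a complete metric space carrying the pattern metric on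
the dense orbit ι of ℝ^n). -/
theorem stronglyEquivariant_factors_through_hull {n : ℕ} (P : Set (E n))
    (hud : UniformlyDiscrete P) (hrd : RelativelyDense P)
    (hFLC : FiniteLocalComplexity P)
    (Y : Type) [MetricSpace Y] [CompleteSpace Y] (ι : E n → Y)
    (hdense : DenseRange ι)
    (hι : ∀ x y : E n, dist (ι x) (ι y) =
      patternDist (setTranslate P x) (setTranslate P y))
    (g : E n → ℂ) (hg : Continuous g) (hSE : StronglyEquivariant P g) :
    ∃ gt : Y → ℂ, Continuous gt ∧ ∀ x : E n, gt (ι x) = g x :=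
  stronglyEquivariant_factors_through_hull_general P hud hrd hFLC Y ι hdense hι g hg hSE
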